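/- The logical operators X̄ = Xop {i, τ i} (for any qubit i) and Z̄ = Zop {0, 1, …, m−1} of the X–I code Ξ(2m) anticommute: X̄ ∘ Z̄ = − Z̄ ∘ X̄. -/

import Mathlib

open scoped BigOperators

/-- Bit strings on `2m` qubits. -/
abbrev Bits (m : ℕ) := Fin (2*m) → ZMod 2

/-- The `2m`-qubit Hilbert space, as functions from computational basis labels to `ℂ`. -/
abbrev QState (m : ℕ) := Bits m → ℂ

/-- Indicator bit string of a finite set of qubits. -/
def indSet (m : ℕ) (S : Finset (Fin (2*m))) : Bits m := fun i => if i ∈ S then 1 else 0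

/-- The Pauli-X operator on the set `S`: sends `|x⟩` to `|x + 1_S⟩`. -/
def Xop (m : ℕ) (S : Finset (Fin (2*m))) : QState m →ₗ[ℂ] QState m where
  toFun v := fun x => v (x + indSet m S)
  map_add' _ _ := rfl
  map_smul' _ _ := rfl

/-- The Pauli-Z operator on the set `S`: sends `|x⟩` to `(-1)^{∑_{i∈S} x i} |x⟩`. -/
def Zop (m : ℕ) (S : Finset (Fin (2*m))) : QState m →ₗ[ℂ] QState m where
  toFun v := fun x => ((-1 : ℂ) ^ (∑ i ∈ S, (x i).val)) * v x
  map_add' u v := by funext x; simp [mul_add]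
  map_smul' c v := by funext x; simp; ring

/-- The antipodal involution `τ i = i + m (mod 2m)`. -/
def tau (m : ℕ) (i : Fin (2*m)) : Fin (2*m) :=
  ⟨(i.val + m) % (2*m), Nat.mod_lt _ (by have := i.isLt; omega)⟩

/-- The computational basis state `|x⟩`. -/
def ket (m : ℕ) (x : Bits m) : QState m := fun y => if y = x then 1 else 0

/-- The pair-equal bit string determined by `b : Fin m → ZMod 2`. -/
def xb (m : ℕ) (b : Fin m → ZMod 2) : Bits m :=
  fun i => b ⟨i.val % m, Nat.mod_lt _ (by have := i.isLt; omega)⟩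

/-- The logical codeword `|0̄⟩` of the X–I code `Ξ(2m)`. -/
noncomputable def ket0 (m : ℕ) : QState m :=
  ((Real.sqrt (2 ^ (m-1)) : ℂ))⁻¹ •
    ∑ b ∈ Finset.univ.filter (fun b : Fin m → ZMod 2 => ∑ i, b i = 0), ket m (xb m b)

/-- The logical codeword `|1̄⟩` of the X–I code `Ξ(2m)`. -/
noncomputable def ket1 (m : ℕ) : QState m :=
  ((Real.sqrt (2 ^ (m-1)) : ℂ))⁻¹ •
    ∑ b ∈ Finset.univ.filter (fun b : Fin m → ZMod 2 => ∑ i, b i = 1), ket m (xb m b)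

/-- The set `{0, 1, …, m−1}` of qubits, one representative from each antipodal pair. -/
def lowerHalf (m : ℕ) : Finset (Fin (2*m)) :=
  Finset.univ.filter (fun i : Fin (2*m) => i.val < m)

/-! Moving `Xop T` past `Zop S` flips the sign `(-1)^{x_j}` of every qubit `j ∈ S ∩ T`, so
the two operators commute up to `(-1)^{|S ∩ T|}`. An antipodal pair `{i, τ i}` meets
`{0, …, m−1}` in exactly one qubit, hence the logical operators anticommute. -/

lemma neg_one_pow_val_add {R : Type*} [Ring R] (a b : ZMod 2) :
    (-1 : R) ^ (a + b).val = (-1) ^ a.val * (-1) ^ b.val := by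
  rw [ZMod.val_add, ← neg_one_pow_eq_pow_mod_two, pow_add]

lemma neg_one_pow_sum_val_add {ι R : Type*} [CommRing R]
    (S : Finset ι) (x y : ι → ZMod 2) :
    (-1 : R) ^ (∑ i ∈ S, (x i + y i).val) =
      (-1) ^ (∑ i ∈ S, (x i).val) * (-1) ^ (∑ i ∈ S, (y i).val) := by
  simp only [← Finset.prod_pow_eq_pow_sum, neg_one_pow_val_add, Finset.prod_mul_distrib]

lemma sum_val_indSet (m : ℕ) (S T : Finset (Fin (2*m))) :
    ∑ j ∈ S, (indSet m T j).val = (S ∩ T).card := by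
  simp only [indSet, apply_ite ZMod.val, ZMod.val_zero]
  rw [Finset.sum_ite_mem, Finset.sum_const, smul_eq_mul, ZMod.val_one, mul_one]

theorem Xop_comp_Zop (m : ℕ) (S T : Finset (Fin (2*m))) :
    (Xop m T).comp (Zop m S) = (-1 : ℂ) ^ (S ∩ T).card • (Zop m S).comp (Xop m T) := by
  ext v x
  simp only [LinearMap.comp_apply, LinearMap.smul_apply, Xop, Zop, LinearMap.coe_mk,
    AddHom.coe_mk, Pi.smul_apply, Pi.add_apply, smul_eq_mul, neg_one_pow_sum_val_add,
    sum_val_indSet]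
  ring

lemma tau_val (m : ℕ) (i : Fin (2*m)) :
    (tau m i).val = if i.val < m then i.val + m else i.val - m := by
  have := i.isLt
  simp only [tau]
  split_ifs
  · exact Nat.mod_eq_of_lt (by omega)
  · rw [Nat.mod_eq_sub_mod (by omega), Nat.mod_eq_of_lt (by omega)]
    omega

lemma tau_mem_lowerHalf_iff (m : ℕ) (i : Fin (2*m)) :
    tau m i ∈ lowerHalf m ↔ i ∉ lowerHalf m := by
  have := i.isLt
  simp only [lowerHalf, Finset.mem_filter, Finset.mem_univ, true_and, tau_val]
  split_ifs <;> omega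

lemma card_lowerHalf_inter_pair (m : ℕ) (i : Fin (2*m)) :
    (lowerHalf m ∩ {i, tau m i}).card = 1 := by
  have htau := tau_mem_lowerHalf_iff m i
  rw [Finset.inter_comm]
  by_cases hi : i ∈ lowerHalf m
  · rw [Finset.insert_inter_of_mem hi, Finset.singleton_inter_of_notMem fun h => htau.1 h hi,
      Finset.insert_empty, Finset.card_singleton]
  · rw [Finset.insert_inter_of_notMem hi, Finset.singleton_inter_of_mem (htau.2 hi),
      Finset.card_singleton]

theorem XI_logical_anticommute_general (m : ℕ) (i : Fin (2*m)) :
    (Xop m {i, tau m i}).comp (Zop m (lowerHalf m)) =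
      -((Zop m (lowerHalf m)).comp (Xop m {i, tau m i})) := by
  rw [Xop_comp_Zop, card_lowerHalf_inter_pair, pow_one]
  exact neg_one_smul ℂ ((Zop m (lowerHalf m)).comp (Xop m {i, tau m i}))

/-- The logical operators `X̄ = Xop {i, τ i}` and `Z̄ = Zop {0, …, m−1}` of the X–I
code `Ξ(2m)` anticommute: `X̄ ∘ Z̄ = − Z̄ ∘ X̄`. -/
theorem XI_logical_anticommute (m : ℕ) (hm : 2 ≤ m) (i : Fin (2*m)) :
    (Xop m {i, tau m i}).comp (Zop m (lowerHalf m)) =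
      -((Zop m (lowerHalf m)).comp (Xop m {i, tau m i})) :=
  XI_logical_anticommute_general m i
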